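/- Let q = √2 − 1 and let f : ℝ → ℝ be a solution of Schilling's problem for q. Then f(q) = 0, f(−q) = 0, f(1 − q) = 0 and f(−1 + q) = 0. -/

import Mathlib

/-!
For `q = √2 - 1` one has `Q = q / (1 - q) = 1 / √2 < 1`, so a solution vanishes wherever `|x| ≥ 1`.
Evaluating the functional equation at `x = 0` gives `f 0 = f 0 / (2q)`, hence `f 0 = 0`; at `x = ±1`
it then gives `f (±q) = 0`. Finally `q (1 + q) = 1 - q`, so evaluating at `x = ±(1 + q)`, whose
neighbours `±q`, `±(1 + q)`, `±(2 + q)` are already known zeros, gives `f (±(1 - q)) = 0`.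
-/

structure IsSchillingSolution (q : ℝ) (f : ℝ → ℝ) : Prop where
  map_mul : ∀ x, f (q * x) = 1 / (4 * q) * (f (x - 1) + f (x + 1) + 2 * f x)
  eq_zero_of_lt_abs : ∀ x, q / (1 - q) < |x| → f x = 0

namespace IsSchillingSolution

variable {q : ℝ} {f : ℝ → ℝ}

theorem comp_neg (hf : IsSchillingSolution q f) : IsSchillingSolution q (fun x ↦ f (-x)) where
  map_mul x := by
    rw [← mul_neg, hf.map_mul, show -x - 1 = -(x + 1) by ring, show -x + 1 = -(x - 1) by ring]
    ring
  eq_zero_of_lt_abs x hx := hf.eq_zero_of_lt_abs (-x) (by rwa [abs_neg])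

theorem apply_mul_eq_zero (hf : IsSchillingSolution q f) {x : ℝ} (h : f x = 0)
    (hl : f (x - 1) = 0) (hr : f (x + 1) = 0) : f (q * x) = 0 := by
  rw [hf.map_mul, h, hl, hr]
  ring

theorem eq_zero_of_one_le_abs (hf : IsSchillingSolution q f) (hq : q < 1 / 2) {x : ℝ}
    (hx : 1 ≤ |x|) : f x = 0 :=
  hf.eq_zero_of_lt_abs x <| ((div_lt_one (by linarith)).2 (by linarith)).trans_le hx

theorem apply_zero (hf : IsSchillingSolution q f) (hq : q < 1 / 2) : f 0 = 0 := by
  have h := hf.map_mul 0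
  rw [mul_zero, zero_sub, zero_add, hf.eq_zero_of_one_le_abs hq (x := -1) (by simp),
    hf.eq_zero_of_one_le_abs hq (x := 1) (by simp)] at h
  rcases eq_or_ne q 0 with rfl | hq0
  · simpa using h
  · field_simp at h
    have : f 0 * (2 * q - 1) = 0 := by linarith
    exact (mul_eq_zero.1 this).resolve_right (by linarith)

theorem apply_self (hf : IsSchillingSolution q f) (hq : q < 1 / 2) : f q = 0 := by
  simpa using hf.apply_mul_eq_zero (x := 1) (hf.eq_zero_of_one_le_abs hq (by simp))
    (by simpa using hf.apply_zero hq) (hf.eq_zero_of_one_le_abs hq (by norm_num))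

theorem apply_mul_one_add (hf : IsSchillingSolution q f) (hq₀ : 0 ≤ q) (hq : q < 1 / 2) :
    f (q * (1 + q)) = 0 :=
  hf.apply_mul_eq_zero (hf.eq_zero_of_one_le_abs hq (by rw [abs_of_nonneg] <;> linarith))
    (by simpa using hf.apply_self hq)
    (hf.eq_zero_of_one_le_abs hq (by rw [abs_of_nonneg] <;> linarith))

end IsSchillingSolution

theorem schilling_sqrt2_values (q : ℝ) (hq : q = Real.sqrt 2 - 1)
    (f : ℝ → ℝ)
    (hfe : ∀ x : ℝ, f (q * x) = (1 / (4 * q)) * (f (x - 1) + f (x + 1) + 2 * f x))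
    (hfv : ∀ x : ℝ, |x| > q / (1 - q) → f x = 0) :
    f q = 0 ∧ f (-q) = 0 ∧ f (1 - q) = 0 ∧ f (-1 + q) = 0 := by
  have hf : IsSchillingSolution q f := ⟨hfe, hfv⟩
  have hsq : Real.sqrt 2 ^ 2 = 2 := Real.sq_sqrt (by norm_num)
  have hq₀ : 0 ≤ q := by nlinarith [Real.sqrt_nonneg 2]
  have hq : q < 1 / 2 := by nlinarith [Real.sqrt_nonneg 2]
  have hq₁ : q * (1 + q) = 1 - q := by nlinarith
  have h := hf.apply_mul_one_add hq₀ hq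
  have h' := hf.comp_neg.apply_mul_one_add hq₀ hq
  rw [hq₁] at h h'
  exact ⟨hf.apply_self hq, hf.comp_neg.apply_self hq, h, by simpa [neg_add_eq_sub] using h'⟩
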